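/- arXiv:2509.09691 — 2 statements merged into one kernel-verified Lean document; each statement's English description precedes it below -/
import Mathlib

section
/- The quantity 1 - S does not satisfy the triangle inequality: there exist vectors ψ₁, ψ₂, ψ₃ ∈ ℂ^L (e.g., L = 1) such that 1 - S(ψ₁,ψ₃) > (1 - S(ψ₁,ψ₂)) + (1 - S(ψ₂,ψ₃)). -/
open Finset

noncomputable def energy {L : ℕ} (ψ : Fin L → ℂ) : ℝ := ∑ x, ‖ψ x‖ ^ 2

noncomputable def resScore {L : ℕ} (ψ₁ ψ₂ : Fin L → ℂ) : ℝ :=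
  if 0 < energy ψ₁ + energy ψ₂ then
    (1/2) * ((∑ x, ‖ψ₁ x + ψ₂ x‖ ^ 2) / (energy ψ₁ + energy ψ₂)) *
      (2 * Real.sqrt (energy ψ₁ * energy ψ₂) / (energy ψ₁ + energy ψ₂))
  else 0

noncomputable def herm {L : ℕ} (ψ₁ ψ₂ : Fin L → ℂ) : ℂ :=
  ∑ x, ψ₁ x * (starRingEnd ℂ) (ψ₂ x)

/-! For real amplitudes on `ℂ¹` the score depends only on their ratio, so the two doubling steps
`1 → 2 → 4` both score `18/25` while the quadrupling `1 → 4` scores only `100/289`: the defect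
`189/289` of the long edge exceeds the sum `14/25` of the two short ones. -/

lemma energy_const_ofReal (a : ℝ) : energy (fun _ : Fin 1 => (a : ℂ)) = a ^ 2 := by
  simp [energy, Complex.norm_real]

lemma resScore_const_ofReal (a b : ℝ) :
    resScore (fun _ : Fin 1 => (a : ℂ)) (fun _ => (b : ℂ)) =
      |a * b| * (a + b) ^ 2 / (a ^ 2 + b ^ 2) ^ 2 := by
  have hsum : ∑ _ : Fin 1, ‖(a : ℂ) + b‖ ^ 2 = (a + b) ^ 2 := by
    simp [← Complex.ofReal_add, Complex.norm_real]
  have hsqrt : Real.sqrt (a ^ 2 * b ^ 2) = |a * b| := by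
    rw [← mul_pow, Real.sqrt_sq_eq_abs]
  rw [resScore, energy_const_ofReal, energy_const_ofReal, hsum, hsqrt]
  split_ifs with hpos
  · field_simp
  · have ha : a = 0 := by nlinarith [sq_nonneg a, sq_nonneg b]
    have hb : b = 0 := by nlinarith [sq_nonneg a, sq_nonneg b]
    simp [ha, hb]

theorem one_sub_resonance_not_triangle :
    ∃ (L : ℕ) (ψ₁ ψ₂ ψ₃ : Fin L → ℂ),
      (1 - resScore ψ₁ ψ₂) + (1 - resScore ψ₂ ψ₃) < 1 - resScore ψ₁ ψ₃ := by
  refine ⟨1, fun _ => ((1 : ℝ) : ℂ), fun _ => ((2 : ℝ) : ℂ), fun _ => ((4 : ℝ) : ℂ), ?_⟩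
  simp only [resScore_const_ofReal]
  norm_num [abs_of_pos]
end

section
/- For two real unit vectors u, v ∈ ℝ^L (viewed as complex vectors via the sign-phase mapping), S(u,v) = (1 + u·v)/2, i.e., resonance is an affine function of cosine similarity on the unit sphere. -/
open Finset

section

variable {L : ℕ}

theorem sum_norm_add_sq (ψ₁ ψ₂ : Fin L → ℂ) :
    ∑ x, ‖ψ₁ x + ψ₂ x‖ ^ 2 = energy ψ₁ + energy ψ₂ + 2 * (herm ψ₁ ψ₂).re := by
  simp only [energy, herm, Complex.sq_norm, Complex.normSq_add, Complex.re_sum, sum_add_distrib,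
    mul_sum]

theorem resScore_of_energy_eq_one {ψ₁ ψ₂ : Fin L → ℂ} (h₁ : energy ψ₁ = 1) (h₂ : energy ψ₂ = 1) :
    resScore ψ₁ ψ₂ = (1 + (herm ψ₁ ψ₂).re) / 2 := by
  rw [resScore, sum_norm_add_sq, h₁, h₂]
  norm_num
  ring

theorem energy_ofReal (u : Fin L → ℝ) : energy (fun x => (u x : ℂ)) = ∑ x, u x ^ 2 := by
  simp only [energy, Complex.norm_real, Real.norm_eq_abs, sq_abs]

theorem herm_ofReal (u v : Fin L → ℝ) :
    herm (fun x => (u x : ℂ)) (fun x => (v x : ℂ)) = ((∑ x, u x * v x : ℝ) : ℂ) := by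
  simp only [herm, Complex.conj_ofReal, Complex.ofReal_sum, Complex.ofReal_mul]

end

theorem resonance_unit_vectors {L : ℕ} (u v : Fin L → ℝ)
    (hu : ∑ x, u x ^ 2 = 1) (hv : ∑ x, v x ^ 2 = 1) :
    resScore (fun x => (u x : ℂ)) (fun x => (v x : ℂ)) =
      (1 + ∑ x, u x * v x) / 2 := by
  rw [resScore_of_energy_eq_one (by rw [energy_ofReal, hu]) (by rw [energy_ofReal, hv]),
    herm_ofReal, Complex.ofReal_re]
end
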